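/- For an indexed tree T (an indexed forest consisting of a single tree) with support contained in the positive integers, let M = max(Supp(T)). Then the evaluation of the forest polynomial β_T at x_i = 1 for all i equals binomial(M, |T|) times the number of decreasing labelings of T, which also equals the number of decreasing labelings of T using distinct labels from {1,...,M}. -/

import Mathlib

/-- Plane binary trees. `leaf` is a leaf, `node l r` an internal node. -/
inductive BT where
  | leaf : BT
  | node : BT → BT → BT
deriving DecidableEq

/-- Number of internal nodes. -/
def BT.size : BT → ℕ
  | .leaf => 0
  | .node l r => l.size + r.size + 1

/-- Multiset of values `ρ_F(v)` (canonical label of the leftmost descendant,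
reached by following left edges) over the internal nodes of a tree whose
inorder canonical labels start at `a`. -/
def BT.rhoMS : BT → ℤ → Multiset ℤ
  | .leaf, _ => 0
  | .node l r, a => a ::ₘ (l.rhoMS a + r.rhoMS (a + l.size + 1))

/-- Multiset of canonical labels of internal nodes whose left child is a leaf
("left support"). -/
def BT.lsuppMS : BT → ℤ → Multiset ℤ
  | .leaf, _ => 0
  | .node l r, a =>
      (if l = BT.leaf then ({a} : Multiset ℤ) else 0) + l.lsuppMS a
        + r.lsuppMS (a + l.size + 1)

/-- The flagged generating polynomial of a binary tree with inorder labels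
starting at `a`, where every label is at least `lo` (lower bound transmitted
from the parent), at most the `ρ`-value of the node, labels weakly increase
down left edges and strictly increase down right edges. The variables are
`x_1, x_2, …` (the variable `X 0` is unused). -/
noncomputable def BT.polyAux : BT → ℤ → ℕ → MvPolynomial ℕ ℚ
  | .leaf, _, _ => 1
  | .node l r, a, lo =>
      ∑ k ∈ Finset.Icc lo a.toNat,
        MvPolynomial.X k * l.polyAux a k * r.polyAux (a + l.size + 1) (k + 1)

/-- The forest polynomial of a single indexed tree with support starting at `a`. -/
noncomputable def BT.poly (t : BT) (a : ℤ) : MvPolynomial ℕ ℚ := t.polyAux a 1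

/-- An indexed forest: a list of binary trees together with the starting points
of their supports, the supports being maximal intervals (consecutive supports
leave a gap of at least one integer). -/
structure IndexedForest where
  trees : List (ℤ × BT)
  nonempty : ∀ p ∈ trees, p.2 ≠ BT.leaf
  gaps : trees.Chain' (fun p q => p.1 + (p.2.size : ℤ) + 1 ≤ q.1)

/-- The support of an indexed forest, as a set of integers. -/
def IndexedForest.Supp (F : IndexedForest) : Set ℤ :=
  {i | ∃ p ∈ F.trees, p.1 ≤ i ∧ i < p.1 + (p.2.size : ℤ)}

/-- The multiset of `ρ_F`-values of all internal nodes of `F`. -/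
def IndexedForest.rhoMS (F : IndexedForest) : Multiset ℤ :=
  (F.trees.map (fun p => p.2.rhoMS p.1)).sum

/-- The `ℕ`-vector `c(F)`: `c_i` counts internal nodes with `ρ_F`-value `i`. -/
def cOf (F : IndexedForest) : ℤ → ℕ := fun i => F.rhoMS.count i

/-- The multiset of left-support labels of `F`. -/
def IndexedForest.lsuppMS (F : IndexedForest) : Multiset ℤ :=
  (F.trees.map (fun p => p.2.lsuppMS p.1)).sum

/-- Forest polynomial of a list of located trees. -/
noncomputable def polyL (ts : List (ℤ × BT)) : MvPolynomial ℕ ℚ :=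
  (ts.map (fun p => p.2.poly p.1)).prod

/-- The forest polynomial of an indexed forest. -/
noncomputable def IndexedForest.poly (F : IndexedForest) : MvPolynomial ℕ ℚ :=
  polyL F.trees

/-- Number of internal nodes of a forest. -/
def IndexedForest.size (F : IndexedForest) : ℕ :=
  (F.trees.map (fun p => p.2.size)).sum

/-- Generic labeled plane binary trees: internal nodes carry a label in `α`. -/
inductive GT (α : Type) where
  | leaf : GT α
  | node : α → GT α → GT α → GT α
deriving DecidableEq

/-- Underlying (unlabeled) shape. -/
def GT.shape {α : Type} : GT α → BT
  | .leaf => BT.leaf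
  | .node _ l r => BT.node l.shape r.shape

/-- Number of internal nodes. -/
def GT.size {α : Type} : GT α → ℕ
  | .leaf => 0
  | .node _ l r => l.size + r.size + 1

/-- Multiset of labels of internal nodes. -/
def GT.labels {α : Type} : GT α → Multiset α
  | .leaf => 0
  | .node k l r => k ::ₘ (l.labels + r.labels)

/-- Relabel a labeled tree. -/
def GT.map {α β : Type} (f : α → β) : GT α → GT β
  | .leaf => .leaf
  | .node k l r => .node (f k) (l.map f) (r.map f)

/-- The root label of a labeled tree (if any) is smaller than `k`. -/
def rootBelow (k : ℕ) : GT ℕ → Prop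
  | .leaf => True
  | .node m _ _ => m < k

/-- A decreasing labeling: labels strictly decrease away from the root. -/
def IsDec : GT ℕ → Prop
  | .leaf => True
  | .node k l r => rootBelow k l ∧ rootBelow k r ∧ IsDec l ∧ IsDec r

/-- Decreasing labelings of the shape `t` with distinct labels drawn from
`{1,…,M}`. -/
def DecSet (t : BT) (M : ℕ) : Set (GT ℕ) :=
  {L | L.shape = t ∧ IsDec L ∧ L.labels.Nodup ∧ ∀ m ∈ L.labels, 1 ≤ m ∧ m ≤ M}

/-!
At `x = (1, 1, …)` the flagged labelings of a node whose label lies in `[lo, A]` are counted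
recursively, and by induction on the tree `β` evaluates to `C(A - lo + |t|, |t|) · h(t)` with
`h(node l r) = C(|l| + |r|, |l|) · h(l) · h(r)`. The inductive step is the hockey-stick identity,
after rewriting `C(j + p, p) · C(j + p + q, q)` as the trinomial `C(p + q, p) · C(j + p + q, p + q)`.
On the other side, a decreasing labeling by a label set `S` carries `max S` at the root and splits
the remaining labels between the two subtrees, so the decreasing labelings with labels in
`{1, …, M}` number `C(M, |t|) · h(t)`.
-/

theorem GT.card_labels (L : GT ℕ) : Multiset.card L.labels = L.shape.size := by
  induction L with
  | leaf => rfl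
  | node k l r ihl ihr => simp [GT.labels, GT.shape, BT.size, ihl, ihr]

theorem IsDec.labels_lt {L : GT ℕ} {k : ℕ} (hd : IsDec L) (hk : rootBelow k L) :
    ∀ m ∈ L.labels, m < k := by
  induction L generalizing k with
  | leaf => simp [GT.labels]
  | node j l r ihl ihr =>
    obtain ⟨hl, hr, hdl, hdr⟩ := hd
    have hjk : j < k := hk
    simp only [GT.labels, Multiset.mem_cons, Multiset.mem_add]
    rintro m (rfl | hm | hm)
    · exact hjk
    · exact (ihl hdl hl m hm).trans hjk
    · exact (ihr hdr hr m hm).trans hjk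

theorem rootBelow_of_forall_lt {L : GT ℕ} {k : ℕ} (h : ∀ m ∈ L.labels, m < k) :
    rootBelow k L := by
  cases L with
  | leaf => trivial
  | node j l r => exact h j (Multiset.mem_cons_self _ _)

theorem IsDec.root_eq_max' {k : ℕ} {L1 L2 : GT ℕ} (hd : IsDec (.node k L1 L2))
    {S : Finset ℕ} (hS : S.Nonempty) (hlab : (GT.node k L1 L2).labels = S.val) :
    k = S.max' hS := by
  obtain ⟨hr1, hr2, hd1, hd2⟩ := hd
  refine le_antisymm (S.le_max' k (by simp [← Finset.mem_val, ← hlab, GT.labels]))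
    (S.max'_le hS k ?_)
  intro x hx
  rw [← Finset.mem_val, ← hlab, GT.labels, Multiset.mem_cons, Multiset.mem_add] at hx
  rcases hx with rfl | hx | hx
  · exact le_rfl
  · exact (hd1.labels_lt hr1 x hx).le
  · exact (hd2.labels_lt hr2 x hx).le

theorem Nat.add_choose_mul_add_add_choose (j p q : ℕ) :
    (j + p).choose p * (j + p + q).choose q
      = (p + q).choose p * (j + p + q).choose (p + q) := by
  have h := Nat.choose_mul (n := j + p + q) (k := j + p) (s := j) (by omega)
  rw [Nat.add_sub_cancel_left, show j + p + q - j = p + q by omega,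
    Nat.choose_symm_of_eq_add (show j + p + q = j + (p + q) by ring),
    Nat.choose_symm_of_eq_add rfl, Nat.choose_symm_add] at h
  rw [mul_comm, h, mul_comm]

theorem Nat.sum_Icc_sub_add_choose_mul (p q lo A : ℕ) (h : lo ≤ A) :
    ∑ k ∈ Finset.Icc lo A, (A - k + p).choose p * (A - k + p + q).choose q
      = (A - lo + p + q + 1).choose (p + q + 1) * (p + q).choose p := by
  have hreindex : ∑ k ∈ Finset.Icc lo A, (A - k + p + q).choose (p + q)
      = ∑ i ∈ Finset.Icc (p + q) (A - lo + p + q), i.choose (p + q) := by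
    apply Finset.sum_nbij' (fun k => A - k + p + q) (fun i => A + p + q - i) <;>
      intro x hx <;> simp only [Finset.mem_Icc] at hx ⊢ <;> omega
  simp_rw [Nat.add_choose_mul_add_add_choose, ← Finset.mul_sum, hreindex, Nat.sum_Icc_choose,
    mul_comm]

namespace BT

/-- The number of decreasing labelings of a shape by `{1, …, t.size}`. -/
def decCount : BT → ℕ
  | .leaf => 1
  | .node l r => (l.size + r.size).choose l.size * decCount l * decCount r

def decFinset : BT → Finset ℕ → Finset (GT ℕ)
  | .leaf, S => if S = ∅ then {GT.leaf} else ∅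
  | .node l r, S =>
      if hS : S.Nonempty then
        ((S.erase (S.max' hS)).powersetCard l.size).biUnion fun A =>
          ((decFinset l A) ×ˢ (decFinset r ((S.erase (S.max' hS)) \ A))).image
            fun p => GT.node (S.max' hS) p.1 p.2
      else ∅

theorem mem_decFinset (t : BT) (S : Finset ℕ) (L : GT ℕ) :
    L ∈ decFinset t S ↔ L.shape = t ∧ IsDec L ∧ L.labels = S.val := by
  induction t generalizing S L with
  | leaf =>
    cases L <;> by_cases hS : S = ∅ <;>
      simp [decFinset, GT.shape, GT.labels, IsDec, hS, eq_comm (a := (0 : Multiset ℕ))]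
  | node l r ihl ihr =>
    by_cases hS : S.Nonempty
    swap
    · rw [Finset.not_nonempty_iff_eq_empty] at hS
      subst hS
      cases L <;> simp [decFinset, GT.labels, GT.shape]
    set m := S.max' hS
    simp only [decFinset, dif_pos hS, Finset.mem_biUnion, Finset.mem_image, Finset.mem_product,
      Finset.mem_powersetCard, Prod.exists, ihl, ihr]
    constructor
    · rintro ⟨A, ⟨hAS, -⟩, L1, L2, ⟨⟨hs1, hd1, hl1⟩, ⟨hs2, hd2, hl2⟩⟩, rfl⟩
      have hlt : ∀ B ⊆ S.erase m, ∀ x ∈ B.val, x < m := fun B hB x hx =>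
        S.lt_max'_of_mem_erase_max' hS (hB hx)
      refine ⟨by simp [GT.shape, hs1, hs2], ⟨rootBelow_of_forall_lt (hl1 ▸ hlt A hAS),
        rootBelow_of_forall_lt (hl2 ▸ hlt _ Finset.sdiff_subset), hd1, hd2⟩, ?_⟩
      change m ::ₘ (L1.labels + L2.labels) = S.val
      rw [hl1, hl2, Finset.sdiff_val, add_tsub_cancel_of_le (Finset.val_le_iff.mpr hAS),
        Finset.erase_val, Multiset.cons_erase (S.max'_mem hS)]
    · rintro ⟨hsh, hd, hlab⟩
      cases L with
      | leaf => simp [GT.shape] at hsh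
      | node k L1 L2 =>
      obtain ⟨hs1, hs2⟩ : L1.shape = l ∧ L2.shape = r := by simpa [GT.shape] using hsh
      obtain ⟨hr1, hr2, hd1, hd2⟩ := hd
      have hlab' : k ::ₘ (L1.labels + L2.labels) = S.val := hlab
      obtain rfl : k = m := IsDec.root_eq_max' ⟨hr1, hr2, hd1, hd2⟩ hS hlab
      have hnd1 : L1.labels.Nodup :=
        (Multiset.nodup_add.mp (Multiset.nodup_cons.mp (hlab' ▸ S.nodup)).2).1
      have hErase : (S.erase m).val = L1.labels + L2.labels := by
        rw [Finset.erase_val, ← hlab', Multiset.erase_cons_head]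
      refine ⟨⟨L1.labels, hnd1⟩, ⟨?_, ?_⟩, L1, L2, ⟨⟨hs1, hd1, rfl⟩, hs2, hd2, ?_⟩, rfl⟩
      · rw [← Finset.val_le_iff, hErase]
        exact Multiset.le_add_right _ _
      · rw [Finset.card_mk, GT.card_labels, hs1]
      · rw [Finset.sdiff_val, hErase, add_tsub_cancel_left]

theorem disjoint_decFinset (t : BT) {S S' : Finset ℕ} (h : S ≠ S') :
    Disjoint (decFinset t S) (decFinset t S') := by
  refine Finset.disjoint_left.mpr fun L hL hL' => h (Finset.val_injective ?_)
  rw [← ((mem_decFinset t S L).mp hL).2.2, ← ((mem_decFinset t S' L).mp hL').2.2]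

theorem card_decFinset (t : BT) {S : Finset ℕ} (hS : S.card = t.size) :
    (decFinset t S).card = decCount t := by
  induction t generalizing S with
  | leaf => simp [decFinset, decCount, Finset.card_eq_zero.mp hS]
  | node l r ihl ihr =>
    have hne : S.Nonempty := Finset.card_pos.mp (hS ▸ Nat.succ_pos _)
    set m := S.max' hne
    have hcard : (S.erase m).card = l.size + r.size := by
      rw [Finset.card_erase_of_mem (S.max'_mem hne), hS]
      rfl
    have node_inj : Function.Injective fun p : GT ℕ × GT ℕ => GT.node m p.1 p.2 :=
      fun p q h => by
        simp only [GT.node.injEq] at h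
        exact Prod.ext h.2.1 h.2.2
    have hterm : ∀ A ∈ (S.erase m).powersetCard l.size,
        (((decFinset l A) ×ˢ (decFinset r ((S.erase m) \ A))).image
          fun p => GT.node m p.1 p.2).card = decCount l * decCount r := by
      intro A hA
      obtain ⟨hAS, hAcard⟩ := Finset.mem_powersetCard.mp hA
      rw [Finset.card_image_of_injective _ node_inj, Finset.card_product, ihl hAcard,
        ihr (by rw [Finset.card_sdiff_of_subset hAS, hcard, hAcard]; omega)]
    rw [decFinset, dif_pos hne, Finset.card_biUnion, Finset.sum_congr rfl hterm,
      Finset.sum_const, Finset.card_powersetCard, hcard, smul_eq_mul, decCount, mul_assoc]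
    intro A _ A' _ hAA'
    simp only [Function.onFun, Finset.disjoint_left, Finset.mem_image, Finset.mem_product,
      Prod.exists, not_exists, not_and]
    rintro _ ⟨L1, L2, ⟨h1, -⟩, rfl⟩ L1' L2' ⟨h1', -⟩ he
    obtain ⟨-, rfl, -⟩ := GT.node.inj he
    exact Finset.disjoint_left.mp (disjoint_decFinset l hAA') h1 h1'

theorem decSet_eq_biUnion (t : BT) (M : ℕ) :
    DecSet t M = ↑(((Finset.Icc 1 M).powersetCard t.size).biUnion (decFinset t)) := by
  ext L
  simp only [DecSet, Set.mem_ofPred_eq, Finset.coe_biUnion, Finset.mem_coe, Set.mem_iUnion,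
    Finset.mem_powersetCard, mem_decFinset, exists_prop]
  constructor
  · rintro ⟨hsh, hd, hnd, hbd⟩
    refine ⟨⟨L.labels, hnd⟩, ⟨fun m hm => Finset.mem_Icc.mpr (hbd m hm), ?_⟩, hsh, hd, rfl⟩
    rw [Finset.card_mk, GT.card_labels, hsh]
  · rintro ⟨S, ⟨hSM, -⟩, hsh, hd, hlab⟩
    rw [hlab]
    exact ⟨hsh, hd, S.nodup, fun m hm => Finset.mem_Icc.mp (hSM hm)⟩

theorem ncard_decSet (t : BT) (M : ℕ) : (DecSet t M).ncard = M.choose t.size * decCount t := by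
  rw [decSet_eq_biUnion, Set.ncard_coe_finset, Finset.card_biUnion
      fun S _ S' _ h => disjoint_decFinset t h,
    Finset.sum_congr rfl fun S hS => card_decFinset t (Finset.mem_powersetCard.mp hS).2,
    Finset.sum_const, Finset.card_powersetCard, Nat.card_Icc, smul_eq_mul, Nat.add_sub_cancel]

theorem eval_one_polyAux (t : BT) (a : ℤ) (lo : ℕ) (h : (lo : ℤ) ≤ a) :
    MvPolynomial.eval (fun _ => (1 : ℚ)) (t.polyAux a lo)
      = (((a.toNat - lo + t.size).choose t.size * t.decCount : ℕ) : ℚ) := by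
  induction t generalizing a lo with
  | leaf => simp [polyAux, size, decCount]
  | node l r ihl ihr =>
    have hterm : ∀ k ∈ Finset.Icc lo a.toNat,
        MvPolynomial.eval (fun _ => (1 : ℚ))
            (MvPolynomial.X k * l.polyAux a k * r.polyAux (a + l.size + 1) (k + 1))
          = (((a.toNat - k + l.size).choose l.size * (a.toNat - k + l.size + r.size).choose r.size
              * (l.decCount * r.decCount) : ℕ) : ℚ) := by
      intro k hk
      rw [Finset.mem_Icc] at hk
      rw [map_mul, map_mul, MvPolynomial.eval_X, one_mul, ihl a k (by omega),
        ihr (a + l.size + 1) (k + 1) (by omega),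
        show (a + l.size + 1).toNat - (k + 1) + r.size = a.toNat - k + l.size + r.size by omega]
      push_cast
      ring
    rw [polyAux, map_sum, Finset.sum_congr rfl hterm, ← Nat.cast_sum, ← Finset.sum_mul,
      Nat.sum_Icc_sub_add_choose_mul _ _ _ _ (by omega), decCount, size,
      show a.toNat - lo + (l.size + r.size + 1) = a.toNat - lo + l.size + r.size + 1 by omega]
    push_cast
    ring

end BT

theorem forest_poly_all_ones_general (t : BT) (a M : ℤ)
    (ha : 1 ≤ a) (hM : M = a + (t.size : ℤ) - 1) :
    (MvPolynomial.eval (fun _ => (1 : ℚ)) (t.poly a)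
        = (M.toNat.choose t.size : ℚ) * ((DecSet t t.size).ncard : ℚ)) ∧
    (MvPolynomial.eval (fun _ => (1 : ℚ)) (t.poly a)
        = ((DecSet t M.toNat).ncard : ℚ)) := by
  have hM' : a.toNat - 1 + t.size = M.toNat := by omega
  rw [BT.poly, BT.eval_one_polyAux t a 1 ha, hM', BT.ncard_decSet, BT.ncard_decSet,
    Nat.choose_self, one_mul]
  exact ⟨Nat.cast_mul _ _, rfl⟩

/-- For an indexed tree `T` with support `[a, M] ⊆ ℤ≥1`
(`M = a + |T| - 1`), the principal specialization `β_T(1,1,…)` equals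
`binom(M, |T|)` times the number of decreasing labelings of `T`, which also
equals the number of decreasing labelings of `T` with distinct labels from
`{1,…,M}`. -/
theorem forest_poly_all_ones (t : BT) (a M : ℤ) (ht : t ≠ BT.leaf)
    (ha : 1 ≤ a) (hM : M = a + (t.size : ℤ) - 1) :
    (MvPolynomial.eval (fun _ => (1 : ℚ)) (t.poly a)
        = (M.toNat.choose t.size : ℚ) * ((DecSet t t.size).ncard : ℚ)) ∧
    (MvPolynomial.eval (fun _ => (1 : ℚ)) (t.poly a)
        = ((DecSet t M.toNat).ncard : ℚ)) :=
  forest_poly_all_ones_general t a M ha hM
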